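/- For m > 0 and the function ψ_d(p) = p^d·exp(W*(p)/p) with W(x) corresponding to N(u) = exp(|u|^m) (i.e. ψ(p) ≍ p^{1/m}), the associated exponential Orlicz function satisfies N_d([ψ], u) ≍ exp(|u|^{m/(dm+1)}) for u ≥ 2; that is, multiplying ψ by p^d changes the exponential exponent from m to m/(dm+1). -/

import Mathlib

open MeasureTheory Real Set Filter

/-- For `m > 0`, `d ∈ ℕ` and `ψ_d(p) = p^d · p^{1/m}` (the case
`ψ(p) = p^{1/m}` corresponding to `N(u) = exp(|u|^m)`), the associated exponential
Orlicz function `N_d([ψ],u) = exp ([p log ψ_d(p)]^*(log u))` satisfies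
`N_d([ψ],u) ≍ exp (|u|^{m/(dm+1)})` for large `u`: multiplying `ψ` by `p^d` changes
the exponent from `m` to `m/(dm+1)`.  Here `≍` means
`exp((c₁ u)^{m/(dm+1)}) ≤ N_d([ψ],u) ≤ exp((c₂ u)^{m/(dm+1)})` for `u` large. -/
theorem stmt19
    (m : ℝ) (hm : 0 < m) (d : ℕ) :
    ∃ c₁ c₂ : ℝ, 0 < c₁ ∧ 0 < c₂ ∧ ∃ u₀ : ℝ, 2 ≤ u₀ ∧
      ∀ u : ℝ, u₀ ≤ u →
        Real.exp ((c₁ * u) ^ (m / (d * m + 1))) ≤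
            Real.exp (sSup ((fun p : ℝ =>
              p * Real.log u - p * Real.log (p ^ (d:ℝ) * p ^ (1/m))) '' Ici 2)) ∧
          Real.exp (sSup ((fun p : ℝ =>
              p * Real.log u - p * Real.log (p ^ (d:ℝ) * p ^ (1/m))) '' Ici 2)) ≤
            Real.exp ((c₂ * u) ^ (m / (d * m + 1))) := by
  set a : ℝ := (d : ℝ) + 1/m with ha_def
  have ha : 0 < a := by positivity
  have ha' : a ≠ 0 := ne_of_gt ha
  have hexp : m / ((d:ℝ) * m + 1) = 1 / a := by
    rw [ha_def]; field_simp
  have he : (0:ℝ) < Real.exp 1 := Real.exp_pos 1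
  refine ⟨(a / Real.exp 1) ^ a, a ^ a, by positivity, by positivity,
    max 2 ((2 * Real.exp 1) ^ a), le_max_left _ _, ?_⟩
  intro u hu
  have hu2 : (2:ℝ) ≤ u := le_trans (le_max_left _ _) hu
  have hu0 : (0:ℝ) < u := by linarith
  set q : ℝ := u ^ (1/a) with hq_def
  have hq0 : 0 < q := Real.rpow_pos_of_pos hu0 _
  have hlogq : Real.log q = (1/a) * Real.log u := Real.log_rpow hu0 _
  -- rewrite the function values
  have hfun : ∀ p : ℝ, 2 ≤ p →
      p * Real.log u - p * Real.log (p ^ (d:ℝ) * p ^ (1/m))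
        = a * p * Real.log (q / p) := by
    intro p hp
    have hp0 : 0 < p := by linarith
    have h1 : p ^ (d:ℝ) * p ^ (1/m) = p ^ a := by
      rw [ha_def, Real.rpow_add hp0]
    rw [h1, Real.log_rpow hp0, Real.log_div (ne_of_gt hq0) (ne_of_gt hp0), hlogq]
    field_simp
  -- upper bound on all values
  have hub : ∀ x ∈ (fun p : ℝ =>
      p * Real.log u - p * Real.log (p ^ (d:ℝ) * p ^ (1/m))) '' Ici 2, x ≤ a * q := by
    rintro x ⟨p, hp, rfl⟩
    simp only [mem_Ici] at hp
    dsimp only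
    rw [hfun p hp]
    have hp0 : 0 < p := by linarith
    have hqp : 0 < q / p := div_pos hq0 hp0
    have hlog : Real.log (q / p) ≤ q / p - 1 := Real.log_le_sub_one_of_pos hqp
    have h2 : a * p * Real.log (q / p) ≤ a * p * (q / p - 1) := by
      apply mul_le_mul_of_nonneg_left hlog (by positivity)
    have h3 : a * p * (q / p - 1) = a * q - a * p := by
      field_simp
    calc a * p * Real.log (q / p) ≤ a * p * (q / p - 1) := h2
      _ = a * q - a * p := h3
      _ ≤ a * q := sub_le_self _ (mul_pos ha hp0).le
  have hbdd : BddAbove ((fun p : ℝ =>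
      p * Real.log u - p * Real.log (p ^ (d:ℝ) * p ^ (1/m))) '' Ici 2) := ⟨a * q, hub⟩
  -- the witness point p₀ = q / e
  have hqe : 2 * Real.exp 1 ≤ q := by
    have h1 : (2 * Real.exp 1) ^ a ≤ u := le_trans (le_max_right _ _) hu
    have h2 : ((2 * Real.exp 1) ^ a) ^ (1/a) ≤ u ^ (1/a) :=
      Real.rpow_le_rpow (by positivity) h1 (by positivity)
    rwa [← Real.rpow_mul (by positivity), mul_one_div_cancel ha', Real.rpow_one] at h2
  set p₀ : ℝ := q / Real.exp 1 with hp₀_def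
  have hp₀2 : 2 ≤ p₀ := by
    rw [hp₀_def, le_div_iff₀ he]
    linarith
  have hqp₀ : q / p₀ = Real.exp 1 := by
    rw [hp₀_def]
    field_simp
  have hmem : a * p₀ * Real.log (q / p₀) ∈ (fun p : ℝ =>
      p * Real.log u - p * Real.log (p ^ (d:ℝ) * p ^ (1/m))) '' Ici 2 := by
    exact ⟨p₀, hp₀2, (hfun p₀ hp₀2).symm ▸ rfl⟩
  have hval : a * p₀ * Real.log (q / p₀) = (a / Real.exp 1) * q := by
    rw [hqp₀, Real.log_exp, hp₀_def]
    field_simp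
  have hlow : (a / Real.exp 1) * q ≤ sSup ((fun p : ℝ =>
      p * Real.log u - p * Real.log (p ^ (d:ℝ) * p ^ (1/m))) '' Ici 2) := by
    rw [← hval]
    exact le_csSup hbdd hmem
  have hhigh : sSup ((fun p : ℝ =>
      p * Real.log u - p * Real.log (p ^ (d:ℝ) * p ^ (1/m))) '' Ici 2) ≤ a * q := by
    apply csSup_le (Set.Nonempty.image _ nonempty_Ici)
    intro x hx
    exact hub x hx
  have hpow : ∀ c : ℝ, 0 < c → (c ^ a * u) ^ (1/a) = c * q := by
    intro c hc
    rw [Real.mul_rpow (by positivity) (le_of_lt hu0),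
      ← Real.rpow_mul (le_of_lt hc), mul_one_div_cancel ha', Real.rpow_one, hq_def]
  constructor
  · rw [Real.exp_le_exp, hexp, hpow (a / Real.exp 1) (by positivity)]
    exact hlow
  · rw [Real.exp_le_exp, hexp, hpow a ha]
    exact hhigh
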